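/- In a J-category, for any morphisms f : A → B, f' : A' → B' with f weakly equivalent to f' (via a commutative square with vertical weak equivalences u : A → A', v : B → B'), and for each n ≥ 0, the n-th iterated join morphisms h_n : *^n_B A → B and h'_n : *^n_{B'} A' → B' are weakly equivalent morphisms; in particular there is a commutative diagram exhibiting v∘h_n as admitting a weak lifting along h'_n via a weak equivalence *^n_B A → dom of an F-factorization of h'_n. -/

import Mathlib

/-!
Induction on `n`, carrying the stronger invariant that `v ∘ hₙ` lifts, by a weak equivalence, into
an F-factorization of `h'ₙ` (`WeqLifting`). Such liftings compose because any two F-factorizations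
of a morphism are comparable, every object being a cofibrant model. In the inductive step the
ingredients of the two joins are compared one by one: the F-factorizations by that argument, the
pullbacks by base change (Brown's factorization reduces a weak equivalence of fibrations to trivial
fibrations, whose base changes are weak equivalences), and the pushouts by pushing out along the
cofibration, after refining two C-factorizations of the same morphism by a common one through
trivial cofibrations. This gives weak equivalences over the base from both joins into one morphism.
-/

open CategoryTheory CategoryTheory.Limits ZeroObject

universe v u v' u'

variable (C : Type u) [Category.{v} C] [HasZeroObject C] [HasZeroMorphisms C]

/-- A category satisfying axioms (J1)-(J4) of Doeraene's J-categories: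
a pointed category with fibrations, cofibrations and weak equivalences. -/
structure PreJCat where
  fib : MorphismProperty C
  cofib : MorphismProperty C
  weq : MorphismProperty C
  /-- (J1) isomorphisms are trivial cofibrations -/
  iso_triv_cofib : ∀ {X Y : C} (f : X ⟶ Y), IsIso f → cofib f ∧ weq f
  /-- (J1) isomorphisms are trivial fibrations -/
  iso_triv_fib : ∀ {X Y : C} (f : X ⟶ Y), IsIso f → fib f ∧ weq f
  fib_comp : ∀ {X Y Z : C} {f : X ⟶ Y} {g : Y ⟶ Z}, fib f → fib g → fib (f ≫ g)
  cofib_comp : ∀ {X Y Z : C} {f : X ⟶ Y} {g : Y ⟶ Z}, cofib f → cofib g → cofib (f ≫ g)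
  /-- (J1) two-out-of-three for weak equivalences -/
  weq_comp : ∀ {X Y Z : C} {f : X ⟶ Y} {g : Y ⟶ Z}, weq f → weq g → weq (f ≫ g)
  weq_of_comp_left : ∀ {X Y Z : C} {f : X ⟶ Y} {g : Y ⟶ Z}, weq g → weq (f ≫ g) → weq f
  weq_of_comp_right : ∀ {X Y Z : C} {f : X ⟶ Y} {g : Y ⟶ Z}, weq f → weq (f ≫ g) → weq g
  /-- (J2) pullbacks of fibrations exist, and the base extension is a fibration -/
  pb_exists : ∀ {E B B' : C} (p : E ⟶ B) (f : B' ⟶ B), fib p →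
    ∃ (P : C) (fb : P ⟶ E) (pb : P ⟶ B'), IsPullback fb pb p f ∧ fib pb
  /-- (J2) base extensions of weak equivalences along fibrations are weak equivalences -/
  pb_weq : ∀ {E B B' P : C} {p : E ⟶ B} {f : B' ⟶ B} {fb : P ⟶ E} {pb : P ⟶ B'},
    fib p → IsPullback fb pb p f → (weq f → weq fb) ∧ (weq p → weq pb)
  /-- (J2) dual: pushouts of cofibrations exist -/
  po_exists : ∀ {A X Y : C} (i : A ⟶ X) (g : A ⟶ Y), cofib i →
    ∃ (Q : C) (inl : X ⟶ Q) (inr : Y ⟶ Q), IsPushout i g inl inr ∧ cofib inr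
  po_weq : ∀ {A X Y Q : C} {i : A ⟶ X} {g : A ⟶ Y} {inl : X ⟶ Q} {inr : Y ⟶ Q},
    cofib i → IsPushout i g inl inr → (weq g → weq inl) ∧ (weq i → weq inr)
  /-- (J3) F-factorizations exist -/
  F_fac : ∀ {X Y : C} (f : X ⟶ Y), ∃ (Z : C) (τ : X ⟶ Z) (q : Z ⟶ Y),
    weq τ ∧ fib q ∧ τ ≫ q = f
  /-- (J3) C-factorizations exist -/
  C_fac : ∀ {X Y : C} (f : X ⟶ Y), ∃ (Z : C) (i : X ⟶ Z) (σ : Z ⟶ Y),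
    cofib i ∧ weq σ ∧ i ≫ σ = f
  /-- (J4) cofibrant replacements exist -/
  cof_replace : ∀ X : C, ∃ (Xb : C) (q : Xb ⟶ X), fib q ∧ weq q ∧
    (∀ {E : C} (p : E ⟶ Xb), fib p → weq p → ∃ s : Xb ⟶ E, s ≫ p = 𝟙 Xb)

variable {C}

namespace PreJCat

/-- An object is a cofibrant model if every trivial fibration onto it admits a section. -/
def CofModel (P : PreJCat C) (X : C) : Prop :=
  ∀ {E : C} (p : E ⟶ X), P.fib p → P.weq p → ∃ s : X ⟶ E, s ≫ p = 𝟙 X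

/-- An object is e-fibrant if the morphism to the zero object is a fibration. -/
def EFibrant (P : PreJCat C) (X : C) : Prop := P.fib (0 : X ⟶ 0)

/-- `f` admits a weak lifting along `g` (all objects being cofibrant models). -/
def WeakLifting (P : PreJCat C) {A B Cc : C} (f : A ⟶ B) (g : Cc ⟶ B) : Prop :=
  ∃ (E : C) (τ : Cc ⟶ E) (q : E ⟶ B), P.weq τ ∧ P.fib q ∧ τ ≫ q = g ∧
    ∃ s : A ⟶ E, s ≫ q = f

/-- `g` admits a weak section. -/
def HasWeakSection (P : PreJCat C) {E B : C} (g : E ⟶ B) : Prop :=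
  P.WeakLifting (𝟙 B) g

/-- `j : J ⟶ B` is a join morphism of `f : A ⟶ B` and `g : Cc ⟶ B`: built from an
F-factorization of `g`, a pullback, a C-factorization and a pushout. -/
def IsJoin (P : PreJCat C) {A Cc B J : C} (f : A ⟶ B) (g : Cc ⟶ B) (j : J ⟶ B) : Prop :=
  ∃ (E : C) (τ : Cc ⟶ E) (q : E ⟶ B), P.weq τ ∧ P.fib q ∧ τ ≫ q = g ∧
  ∃ (E' Z : C) (fbar : E' ⟶ E) (pbar : E' ⟶ A) (i : E' ⟶ Z) (σ : Z ⟶ E)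
    (a : A ⟶ J) (bz : Z ⟶ J),
    IsPullback fbar pbar q f ∧ P.cofib i ∧ P.weq σ ∧ i ≫ σ = fbar ∧
    IsPushout pbar i a bz ∧ a ≫ j = f ∧ bz ≫ j = σ ≫ q

/-- `IsIterJoin P p n h` : `h` is an `n`-th iterated join morphism `*ⁿ_B E ⟶ B` of `p`. -/
inductive IsIterJoin (P : PreJCat C) {E B : C} (p : E ⟶ B) : ℕ → ∀ {X : C}, (X ⟶ B) → Prop
  | zero : IsIterJoin P p 0 p
  | succ {n : ℕ} {X Y : C} {h : X ⟶ B} {h' : Y ⟶ B} :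
      IsIterJoin P p n h → P.IsJoin h p h' → IsIterJoin P p (n + 1) h'

/-- The Ganea-type sectional category of a morphism. -/
noncomputable def Gsecat (P : PreJCat C) {E B : C} (p : E ⟶ B) : ℕ∞ :=
  sInf {n : ℕ∞ | ∃ m : ℕ, n = (m : ℕ∞) ∧
    ∃ (X : C) (h : X ⟶ B), P.IsIterJoin p m h ∧ P.HasWeakSection h}

end PreJCat

/-- `p1, p2` exhibit `Pd` as a binary product of `X` and `Y`. -/
def IsBinProd {X Y Pd : C} (p1 : Pd ⟶ X) (p2 : Pd ⟶ Y) : Prop :=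
  Nonempty (IsLimit (BinaryFan.mk p1 p2))

namespace PreJCat

/-- `IsFatWedge P p n j Δ` : `j : Tⁿ(p) ⟶ B^{n+1}` is an `n`-th fat wedge morphism of `p`
together with the diagonal `Δ : B ⟶ B^{n+1}`. -/
inductive IsFatWedge (P : PreJCat C) {E B : C} (p : E ⟶ B) :
    ℕ → ∀ {T Pw : C}, (T ⟶ Pw) → (B ⟶ Pw) → Prop
  | zero : IsFatWedge P p 0 p (𝟙 B)
  | succ {n : ℕ} {T Pn : C} {j : T ⟶ Pn} {Δ : B ⟶ Pn}
      (hprev : IsFatWedge P p n j Δ)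
      {Pn1 : C} {pr1 : Pn1 ⟶ Pn} {pr2 : Pn1 ⟶ B} (hP : IsBinProd pr1 pr2)
      {TB : C} {q1 : TB ⟶ T} {q2 : TB ⟶ B} (hTB : IsBinProd q1 q2)
      {PE : C} {r1 : PE ⟶ Pn} {r2 : PE ⟶ E} (hPE : IsBinProd r1 r2)
      {jB : TB ⟶ Pn1} (hjB : jB ≫ pr1 = q1 ≫ j ∧ jB ≫ pr2 = q2)
      {pP : PE ⟶ Pn1} (hpP : pP ≫ pr1 = r1 ∧ pP ≫ pr2 = r2 ≫ p)
      {Tn1 : C} {j' : Tn1 ⟶ Pn1} (hjoin : P.IsJoin jB pP j')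
      {Δ' : B ⟶ Pn1} (hΔ : Δ' ≫ pr1 = Δ ∧ Δ' ≫ pr2 = 𝟙 B) :
      IsFatWedge P p (n + 1) j' Δ'

/-- The Whitehead-type sectional category of a morphism with e-fibrant codomain. -/
noncomputable def WsecatE (P : PreJCat C) {E B : C} (p : E ⟶ B) : ℕ∞ :=
  sInf {n : ℕ∞ | ∃ m : ℕ, n = (m : ℕ∞) ∧
    ∃ (T Pw : C) (j : T ⟶ Pw) (Δ : B ⟶ Pw), P.IsFatWedge p m j Δ ∧ P.WeakLifting Δ j}

/-- The Whitehead-type sectional category of an arbitrary morphism, via e-fibrant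
replacements of the codomain. -/
noncomputable def Wsecat (P : PreJCat C) {E B : C} (p : E ⟶ B) : ℕ∞ :=
  ⨅ (F : C) (τ : B ⟶ F) (_ : P.weq τ ∧ P.EFibrant F), P.WsecatE (p ≫ τ)

/-- A commutative square is a homotopy pullback. -/
def IsHPB (P : PreJCat C) {D A Cc B : C} (f' : D ⟶ Cc) (g' : D ⟶ A)
    (g : Cc ⟶ B) (f : A ⟶ B) : Prop :=
  f' ≫ g = g' ≫ f ∧ ∃ (E : C) (τ : Cc ⟶ E) (q : E ⟶ B), P.weq τ ∧ P.fib q ∧ τ ≫ q = g ∧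
    ∃ (Pt : C) (pr1 : Pt ⟶ E) (pr2 : Pt ⟶ A), IsPullback pr1 pr2 q f ∧
      ∃ w : D ⟶ Pt, P.weq w ∧ w ≫ pr1 = f' ≫ τ ∧ w ≫ pr2 = g'

/-- A commutative square is a homotopy pushout. -/
def IsHPO (P : PreJCat C) {A B Cc D : C} (f : A ⟶ B) (g : A ⟶ Cc)
    (i' : B ⟶ D) (j' : Cc ⟶ D) : Prop :=
  f ≫ i' = g ≫ j' ∧ ∃ (Z : C) (i : A ⟶ Z) (σ : Z ⟶ B), P.cofib i ∧ P.weq σ ∧ i ≫ σ = f ∧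
    ∃ (Q : C) (inl : Z ⟶ Q) (inr : Cc ⟶ Q), IsPushout i g inl inr ∧
      ∃ w : Q ⟶ D, P.weq w ∧ inl ≫ w = σ ≫ i' ∧ inr ≫ w = j'

/-- `A-A'-B'-B` is a weak pullback over `b : B ⟶ B'` (all objects cofibrant models). -/
def IsWeakPullback (P : PreJCat C) {A B A' B' : C}
    (f : A ⟶ B) (f' : A' ⟶ B') (b : B ⟶ B') : Prop :=
  ∃ (X : C) (τ : A' ⟶ X) (q : X ⟶ B'), P.weq τ ∧ P.fib q ∧ τ ≫ q = f' ∧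
    ∃ x : A ⟶ X, P.IsHPB x f q b

/-- `g : G ⟶ B` is an `n`-th Ganea map of `B`: the `n`-th iterated join of `0 ⟶ B`. -/
def IsGaneaMap (P : PreJCat C) (B : C) (n : ℕ) {G : C} (g : G ⟶ B) : Prop :=
  P.IsIterJoin (0 : (0 : C) ⟶ B) n g

/-- The Lusternik-Schnirelmann category of an object. -/
noncomputable def catObj (P : PreJCat C) (B : C) : ℕ∞ :=
  sInf {n : ℕ∞ | ∃ m : ℕ, n = (m : ℕ∞) ∧
    ∃ (G : C) (g : G ⟶ B), P.IsGaneaMap B m g ∧ P.HasWeakSection g}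

/-- The Lusternik-Schnirelmann category of a morphism `b : B ⟶ B'`:
least `n` such that `b` admits a weak lifting along the `n`-th Ganea map of `B'`. -/
noncomputable def catMor (P : PreJCat C) {B B' : C} (b : B ⟶ B') : ℕ∞ :=
  sInf {n : ℕ∞ | ∃ m : ℕ, n = (m : ℕ∞) ∧
    ∃ (G : C) (g : G ⟶ B'), P.IsGaneaMap B' m g ∧ P.WeakLifting b g}

/-- One step of a zigzag: a weak equivalence of morphisms in the arrow category. -/
def MorWeqStep (P : PreJCat C) (u v : Arrow C) : Prop :=
  ∃ h : u ⟶ v, P.weq h.left ∧ P.weq h.right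

/-- Two morphisms are weakly equivalent: joined by a finite zigzag of weak
equivalences of morphisms. -/
def WeaklyEquivMor (P : PreJCat C) (u v : Arrow C) : Prop :=
  Relation.EqvGen P.MorWeqStep u v

def ObjWeqStep (P : PreJCat C) (X Y : C) : Prop := ∃ f : X ⟶ Y, P.weq f

/-- Two objects are weakly equivalent: joined by a finite zigzag of weak equivalences. -/
def WeaklyEquivObj (P : PreJCat C) (X Y : C) : Prop :=
  Relation.EqvGen P.ObjWeqStep X Y

/-- The abstract topological complexity of an e-fibrant object:
the sectional category of the diagonal `B ⟶ B × B`. -/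
noncomputable def TCE (P : PreJCat C) (B : C) : ℕ∞ :=
  ⨅ (Pd : C) (p1 : Pd ⟶ B) (p2 : Pd ⟶ B) (_ : IsBinProd p1 p2)
    (Δ : B ⟶ Pd) (_ : Δ ≫ p1 = 𝟙 B ∧ Δ ≫ p2 = 𝟙 B), P.Gsecat Δ

/-- The abstract topological complexity of an arbitrary object, via e-fibrant
replacements. -/
noncomputable def TC (P : PreJCat C) (B : C) : ℕ∞ :=
  ⨅ (F : C) (τ : B ⟶ F) (_ : P.weq τ ∧ P.EFibrant F), P.TCE F

end PreJCat

variable (C)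

/-- A J-category: (J1)-(J4) together with the cube axiom (J5). -/
structure JCat extends PreJCat C where
  /-- (J5) the cube axiom: in a commutative cube whose bottom face is a homotopy
  pushout and whose vertical faces are homotopy pullbacks, the top face is a
  homotopy pushout. -/
  cube : ∀ {X00 X01 X10 X11 Y00 Y01 Y10 Y11 : C}
    {tf : X00 ⟶ X01} {tg : X00 ⟶ X10} {ti : X01 ⟶ X11} {tj : X10 ⟶ X11}
    {bf : Y00 ⟶ Y01} {bg : Y00 ⟶ Y10} {bi : Y01 ⟶ Y11} {bj : Y10 ⟶ Y11}
    {v00 : X00 ⟶ Y00} {v01 : X01 ⟶ Y01} {v10 : X10 ⟶ Y10} {v11 : X11 ⟶ Y11},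
    tf ≫ ti = tg ≫ tj →
    toPreJCat.IsHPO bf bg bi bj →
    toPreJCat.IsHPB tf v00 v01 bf →
    toPreJCat.IsHPB tg v00 v10 bg →
    toPreJCat.IsHPB ti v01 v11 bi →
    toPreJCat.IsHPB tj v10 v11 bj →
    toPreJCat.IsHPO tf tg ti tj

variable {C}

/-- A modelization functor: preserves weak equivalences, homotopy pullbacks and
homotopy pushouts. -/
structure ModelizationFunctor {D : Type u'} [Category.{v'} D] [HasZeroObject D]
    [HasZeroMorphisms D] (P : PreJCat C) (Q : PreJCat D) where
  F : C ⥤ D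
  map_weq : ∀ {X Y : C} (f : X ⟶ Y), P.weq f → Q.weq (F.map f)
  map_hpb : ∀ {Dd A Cc B : C} {f' : Dd ⟶ Cc} {g' : Dd ⟶ A} {g : Cc ⟶ B} {f : A ⟶ B},
    P.IsHPB f' g' g f → Q.IsHPB (F.map f') (F.map g') (F.map g) (F.map f)
  map_hpo : ∀ {A B Cc Dd : C} {f : A ⟶ B} {g : A ⟶ Cc} {i' : B ⟶ Dd} {j' : Cc ⟶ Dd},
    P.IsHPO f g i' j' → Q.IsHPO (F.map f) (F.map g) (F.map i') (F.map j')

section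

variable {C : Type u} [Category.{v} C]

namespace PreJCat

lemma weq_id (P : PreJCat C) (X : C) : P.weq (𝟙 X) :=
  (P.iso_triv_fib _ inferInstance).2

variable {P : PreJCat C}

lemma fib_of_isPullback {E B X Pt : C} {p : E ⟶ B} {g : X ⟶ B} {fst : Pt ⟶ E}
    {snd : Pt ⟶ X} (h : IsPullback fst snd p g) (hp : P.fib p) : P.fib snd := by
  obtain ⟨P₀, fst₀, snd₀, h₀, hsnd₀⟩ := P.pb_exists p g hp
  rw [← h.isoIsPullback_hom_snd _ _ h₀]
  exact P.fib_comp (P.iso_triv_fib _ inferInstance).1 hsnd₀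

lemma cofib_of_isPushout {A X Y Q : C} {i : A ⟶ X} {g : A ⟶ Y} {inl : X ⟶ Q}
    {inr : Y ⟶ Q} (h : IsPushout i g inl inr) (hi : P.cofib i) : P.cofib inr := by
  obtain ⟨Q₀, inl₀, inr₀, h₀, hinr₀⟩ := P.po_exists i g hi
  rw [← h₀.inr_isoIsPushout_hom _ _ h]
  exact P.cofib_comp hinr₀ (P.iso_triv_cofib _ inferInstance).1

variable (P) in
def FactorsThroughWeq {X Y B : C} (f : X ⟶ B) (g : Y ⟶ B) : Prop :=
  ∃ w : X ⟶ Y, P.weq w ∧ w ≫ g = f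

variable (P) in
lemma FactorsThroughWeq.refl {X B : C} (f : X ⟶ B) : P.FactorsThroughWeq f f :=
  ⟨𝟙 X, P.weq_id X, Category.id_comp f⟩

lemma FactorsThroughWeq.trans {X Y Z B : C} {f : X ⟶ B} {g : Y ⟶ B} {k : Z ⟶ B}
    (h₁ : P.FactorsThroughWeq f g) (h₂ : P.FactorsThroughWeq g k) :
    P.FactorsThroughWeq f k := by
  obtain ⟨w₁, hw₁, rfl⟩ := h₁
  obtain ⟨w₂, hw₂, rfl⟩ := h₂
  exact ⟨w₁ ≫ w₂, P.weq_comp hw₁ hw₂, Category.assoc _ _ _⟩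

variable (P) in
def WeqLifting {A B Cc : C} (f : A ⟶ B) (g : Cc ⟶ B) : Prop :=
  ∃ (E : C) (τ : Cc ⟶ E) (q : E ⟶ B), P.weq τ ∧ P.fib q ∧ τ ≫ q = g ∧
    ∃ s : A ⟶ E, P.weq s ∧ s ≫ q = f

variable (P) in
lemma WeqLifting.of_factorsThroughWeq {X Y Z B : C} {f : X ⟶ B} {g : Y ⟶ B} {k : Z ⟶ B}
    (hf : P.FactorsThroughWeq f k) (hg : P.FactorsThroughWeq g k) : P.WeqLifting f g := by
  obtain ⟨E, τ, q, hτ, hq, rfl⟩ := P.F_fac k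
  obtain ⟨s, hs, rfl⟩ := hf
  obtain ⟨t, ht, rfl⟩ := hg
  exact ⟨E, t ≫ τ, q, P.weq_comp ht hτ, hq, Category.assoc _ _ _,
    s ≫ τ, P.weq_comp hs hτ, Category.assoc _ _ _⟩

lemma WeqLifting.symm {X Y B : C} {f : X ⟶ B} {g : Y ⟶ B} (h : P.WeqLifting f g) :
    P.WeqLifting g f := by
  obtain ⟨E, τ, q, hτ, hq, hτq, s, hs, hsq⟩ := h
  exact ⟨E, s, q, hs, hq, hsq, τ, hτ, hτq⟩

lemma factorsThroughWeq_of_fFactorizations {A B E₁ E₂ : C} {τ₁ : A ⟶ E₁} {q₁ : E₁ ⟶ B}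
    {τ₂ : A ⟶ E₂} {q₂ : E₂ ⟶ B} (hE₁ : P.CofModel E₁) (hτ₁ : P.weq τ₁) (hτ₂ : P.weq τ₂)
    (hq₂ : P.fib q₂) (hw : τ₁ ≫ q₁ = τ₂ ≫ q₂) : P.FactorsThroughWeq q₁ q₂ := by
  obtain ⟨R, fst, snd, hR, hsnd⟩ := P.pb_exists q₂ q₁ hq₂
  obtain ⟨N, t, p, ht, hp, htp⟩ := P.F_fac (hR.lift τ₂ τ₁ hw.symm)
  have hpfst : t ≫ p ≫ fst = τ₂ := by rw [← Category.assoc, htp, hR.lift_fst]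
  have hpsnd : t ≫ p ≫ snd = τ₁ := by rw [← Category.assoc, htp, hR.lift_snd]
  have hpsnd_weq : P.weq (p ≫ snd) := P.weq_of_comp_right ht (by rw [hpsnd]; exact hτ₁)
  -- `E₁` is a cofibrant model, so the trivial fibration `p ≫ snd` onto it has a section
  obtain ⟨s, hs⟩ := hE₁ _ (P.fib_comp hp hsnd) hpsnd_weq
  have hs_weq : P.weq s := P.weq_of_comp_left hpsnd_weq (by rw [hs]; exact P.weq_id _)
  refine ⟨s ≫ p ≫ fst, P.weq_comp hs_weq
    (P.weq_of_comp_right ht (by rw [hpfst]; exact hτ₂)), ?_⟩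
  rw [Category.assoc, Category.assoc, hR.w, ← Category.assoc p, ← Category.assoc s, hs,
    Category.id_comp]

lemma WeqLifting.trans (hc : ∀ X : C, P.CofModel X) {X Y Z B : C} {f : X ⟶ B} {g : Y ⟶ B}
    {k : Z ⟶ B} (h₁ : P.WeqLifting f g) (h₂ : P.WeqLifting g k) : P.WeqLifting f k := by
  obtain ⟨E₁, τ₁, q₁, hτ₁, -, hτq₁, s₁, hs₁, hsq₁⟩ := h₁
  obtain ⟨E₂, τ₂, q₂, hτ₂, hq₂, hτq₂, s₂, hs₂, hsq₂⟩ := h₂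
  obtain ⟨e, he, heq⟩ :=
    factorsThroughWeq_of_fFactorizations (hc E₁) hτ₁ hs₂ hq₂ (hτq₁.trans hsq₂.symm)
  exact ⟨E₂, τ₂, q₂, hτ₂, hq₂, hτq₂, s₁ ≫ e, P.weq_comp hs₁ he,
    by rw [Category.assoc, heq, hsq₁]⟩

lemma weq_pullbackMap_of_trivFib {N E B X P₁ P₂ : C} {ν : N ⟶ E} {q : E ⟶ B} {g : X ⟶ B}
    {fst₁ : P₁ ⟶ N} {snd₁ : P₁ ⟶ X} {fst₂ : P₂ ⟶ E} {snd₂ : P₂ ⟶ X}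
    (h₁ : IsPullback fst₁ snd₁ (ν ≫ q) g) (h₂ : IsPullback fst₂ snd₂ q g)
    (hν : P.fib ν) (hν_weq : P.weq ν) {ρ : P₁ ⟶ P₂} (hρ₁ : ρ ≫ fst₂ = fst₁ ≫ ν)
    (hρ₂ : ρ ≫ snd₂ = snd₁) : P.weq ρ :=
  (P.pb_weq hν (IsPullback.of_bot (by rwa [hρ₂]) hρ₁.symm h₂)).2 hν_weq

lemma weq_pullbackMap_of_weq_base {E B X Y P₁ P₂ : C} {q : E ⟶ B} {x : X ⟶ Y} {g : Y ⟶ B}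
    {fst₁ : P₁ ⟶ E} {snd₁ : P₁ ⟶ X} {fst₂ : P₂ ⟶ E} {snd₂ : P₂ ⟶ Y}
    (h₁ : IsPullback fst₁ snd₁ q (x ≫ g)) (h₂ : IsPullback fst₂ snd₂ q g)
    (hq : P.fib q) (hx : P.weq x) {ρ : P₁ ⟶ P₂} (hρ₁ : ρ ≫ fst₂ = fst₁)
    (hρ₂ : ρ ≫ snd₂ = snd₁ ≫ x) : P.weq ρ :=
  (P.pb_weq (fib_of_isPullback h₂ hq) (IsPullback.of_right (by rwa [hρ₁]) hρ₂ h₂)).1 hx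

/-- Brown's factorization lemma for a weak equivalence between fibrations over `B`. -/
lemma exists_trivFib_span_of_weq {E₁ E₂ B : C} {q₁ : E₁ ⟶ B} {q₂ : E₂ ⟶ B} {e : E₁ ⟶ E₂}
    (hq₁ : P.fib q₁) (hq₂ : P.fib q₂) (he : P.weq e) (heq : e ≫ q₂ = q₁) :
    ∃ (N : C) (s : E₁ ⟶ N) (μ : N ⟶ E₁) (ν : N ⟶ E₂), P.fib μ ∧ P.weq μ ∧ P.fib ν ∧
      P.weq ν ∧ μ ≫ q₁ = ν ≫ q₂ ∧ s ≫ μ = 𝟙 E₁ ∧ s ≫ ν = e := by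
  obtain ⟨R, fst, snd, hR, hsnd⟩ := P.pb_exists q₂ q₁ hq₂
  have w : e ≫ q₂ = 𝟙 E₁ ≫ q₁ := by rw [heq, Category.id_comp]
  obtain ⟨N, s, p, hs, hp, hsp⟩ := P.F_fac (hR.lift e (𝟙 E₁) w)
  have hsμ : s ≫ p ≫ snd = 𝟙 E₁ := by rw [← Category.assoc, hsp, hR.lift_snd]
  have hsν : s ≫ p ≫ fst = e := by rw [← Category.assoc, hsp, hR.lift_fst]
  refine ⟨N, s, p ≫ snd, p ≫ fst, P.fib_comp hp hsnd,
    P.weq_of_comp_right hs (by rw [hsμ]; exact P.weq_id E₁),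
    P.fib_comp hp (fib_of_isPullback hR.flip hq₁),
    P.weq_of_comp_right hs (by rw [hsν]; exact he), ?_, hsμ, hsν⟩
  rw [Category.assoc, Category.assoc, hR.w]

lemma weq_pullbackMap_of_weq {E₁ E₂ B X P₁ P₂ : C} {q₁ : E₁ ⟶ B} {q₂ : E₂ ⟶ B}
    {e : E₁ ⟶ E₂} {g : X ⟶ B} {fst₁ : P₁ ⟶ E₁} {snd₁ : P₁ ⟶ X} {fst₂ : P₂ ⟶ E₂}
    {snd₂ : P₂ ⟶ X} (hq₁ : P.fib q₁) (hq₂ : P.fib q₂) (he : P.weq e) (heq : e ≫ q₂ = q₁)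
    (h₁ : IsPullback fst₁ snd₁ q₁ g) (h₂ : IsPullback fst₂ snd₂ q₂ g) {ρ : P₁ ⟶ P₂}
    (hρ₁ : ρ ≫ fst₂ = fst₁ ≫ e) (hρ₂ : ρ ≫ snd₂ = snd₁) : P.weq ρ := by
  obtain ⟨N, s, μ, ν, hμ, hμ_weq, hν, hν_weq, hμν, hsμ, hsν⟩ :=
    exists_trivFib_span_of_weq hq₁ hq₂ he heq
  obtain ⟨PN, fstN, sndN, hN, -⟩ := P.pb_exists (μ ≫ q₁) g (P.fib_comp hμ hq₁)
  have wμ : (fstN ≫ μ) ≫ q₁ = sndN ≫ g := by rw [Category.assoc, hN.w]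
  have wν : (fstN ≫ ν) ≫ q₂ = sndN ≫ g := by rw [Category.assoc, ← hμν, hN.w]
  have hπ₁ := weq_pullbackMap_of_trivFib hN h₁ hμ hμ_weq (h₁.lift_fst _ _ wμ) (h₁.lift_snd _ _ wμ)
  have hπ₂ := weq_pullbackMap_of_trivFib (hμν ▸ hN) h₂ hν hν_weq
    (h₂.lift_fst _ _ wν) (h₂.lift_snd _ _ wν)
  -- the base change of `s` is a section of the base change of `μ`, hence a weak equivalence
  have ws : (fst₁ ≫ s) ≫ μ ≫ q₁ = snd₁ ≫ g := by
    rw [Category.assoc, ← Category.assoc s, hsμ, Category.id_comp, h₁.w]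
  have hsec : hN.lift (fst₁ ≫ s) snd₁ ws ≫ h₁.lift (fstN ≫ μ) sndN wμ = 𝟙 P₁ :=
    h₁.hom_ext (by simp [hsμ]) (by simp)
  have hs_weq : P.weq (hN.lift (fst₁ ≫ s) snd₁ ws) :=
    P.weq_of_comp_left hπ₁ (by rw [hsec]; exact P.weq_id P₁)
  have hρ : hN.lift (fst₁ ≫ s) snd₁ ws ≫ h₂.lift (fstN ≫ ν) sndN wν = ρ :=
    h₂.hom_ext (by simp [hsν, hρ₁]) (by simp [hρ₂])
  rw [← hρ]
  exact P.weq_comp hs_weq hπ₂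

def IsGluing {Pp X Z J B : C} (pbar : Pp ⟶ X) (i : Pp ⟶ Z) (g : X ⟶ B) (k : Z ⟶ B)
    (j : J ⟶ B) : Prop :=
  ∃ (a : X ⟶ J) (b : Z ⟶ J), IsPushout pbar i a b ∧ a ≫ j = g ∧ b ≫ j = k

lemma IsGluing.paste {Pp Pp' X Z Zp J B : C} {pbar' : Pp' ⟶ X} {i : Pp ⟶ Z} {ρ : Pp ⟶ Pp'}
    {l : Z ⟶ Zp} {r : Pp' ⟶ Zp} {g : X ⟶ B} {k : Zp ⟶ B} {j : J ⟶ B}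
    (hZ : IsPushout i ρ l r) (h : IsGluing pbar' r g k j) :
    IsGluing (ρ ≫ pbar') i g (l ≫ k) j := by
  obtain ⟨a, b, hpo, ha, hb⟩ := h
  exact ⟨a, l ≫ b, hZ.flip.paste_horiz hpo, ha, by rw [Category.assoc, hb]⟩

variable (P) in
lemma exists_isGluing {Pp X Z B : C} {pbar : Pp ⟶ X} {i : Pp ⟶ Z} {g : X ⟶ B} {k : Z ⟶ B}
    (hi : P.cofib i) (w : pbar ≫ g = i ≫ k) : ∃ (J : C) (j : J ⟶ B), IsGluing pbar i g k j := by
  obtain ⟨J, b, a, hpo, -⟩ := P.po_exists i pbar hi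
  exact ⟨J, hpo.flip.desc g k w, a, b, hpo.flip, hpo.flip.inl_desc _ _ w,
    hpo.flip.inr_desc _ _ w⟩

lemma IsGluing.factorsThroughWeq_of_weq {Pp X X' Z J J' B B' : C} {pbar : Pp ⟶ X}
    {i : Pp ⟶ Z} {x : X ⟶ X'} {g : X ⟶ B} {g' : X' ⟶ B'} {k : Z ⟶ B} {v : B ⟶ B'}
    {j : J ⟶ B} {j' : J' ⟶ B'} (h : IsGluing pbar i g k j)
    (h' : IsGluing (pbar ≫ x) i g' (k ≫ v) j') (hi : P.cofib i) (hx : P.weq x)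
    (hxg : x ≫ g' = g ≫ v) : P.FactorsThroughWeq (j ≫ v) j' := by
  obtain ⟨a, b, hpo, ha, hb⟩ := h
  obtain ⟨a', b', hpo', ha', hb'⟩ := h'
  have w : pbar ≫ x ≫ a' = i ≫ b' := by rw [← Category.assoc, hpo'.w]
  have hinl := hpo.inl_desc _ _ w
  have hinr := hpo.inr_desc _ _ w
  have hsq : IsPushout x a a' (hpo.desc _ _ w) :=
    IsPushout.of_left (by rwa [hinr]) hinl.symm hpo
  refine ⟨hpo.desc _ _ w, (P.po_weq (cofib_of_isPushout hpo.flip hi) hsq.flip).1 hx,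
    hpo.hom_ext ?_ ?_⟩
  · rw [← Category.assoc, hinl, Category.assoc, ha', hxg, ← Category.assoc, ha]
  · rw [← Category.assoc, hinr, hb', ← Category.assoc, hb]

lemma IsGluing.factorsThroughWeq_of_trivCofib {Pp X Z Z₄ J J₄ B : C} {pbar : Pp ⟶ X}
    {i : Pp ⟶ Z} {ζ : Z ⟶ Z₄} {g : X ⟶ B} {k : Z ⟶ B} {k₄ : Z₄ ⟶ B} {j : J ⟶ B}
    {j₄ : J₄ ⟶ B} (h : IsGluing pbar i g k j) (h₄ : IsGluing pbar (i ≫ ζ) g k₄ j₄)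
    (hζ : P.cofib ζ) (hζ_weq : P.weq ζ) (hk : ζ ≫ k₄ = k) : P.FactorsThroughWeq j j₄ := by
  obtain ⟨a, b, hpo, ha, hb⟩ := h
  obtain ⟨a₄, b₄, hpo₄, ha₄, hb₄⟩ := h₄
  have w : pbar ≫ a₄ = i ≫ ζ ≫ b₄ := by rw [hpo₄.w, Category.assoc]
  have hinl := hpo.inl_desc _ _ w
  have hinr := hpo.inr_desc _ _ w
  have hsq : IsPushout ζ b b₄ (hpo.desc _ _ w) :=
    IsPushout.of_left (by rw [hinl]; exact hpo₄.flip) hinr.symm hpo.flip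
  refine ⟨hpo.desc _ _ w, (P.po_weq hζ hsq).2 hζ_weq, hpo.hom_ext ?_ ?_⟩
  · rw [← Category.assoc, hinl, ha₄, ha]
  · rw [← Category.assoc, hinr, Category.assoc, hb₄, hk, hb]

lemma exists_refinement_of_cFactorizations {A Z₁ Z₂ E : C} {i₁ : A ⟶ Z₁} {σ₁ : Z₁ ⟶ E}
    {i₂ : A ⟶ Z₂} {σ₂ : Z₂ ⟶ E} (hi₁ : P.cofib i₁) (hσ₁ : P.weq σ₁) (hi₂ : P.cofib i₂)
    (hσ₂ : P.weq σ₂) (hw : i₁ ≫ σ₁ = i₂ ≫ σ₂) :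
    ∃ (Z : C) (ζ₁ : Z₁ ⟶ Z) (ζ₂ : Z₂ ⟶ Z) (σ : Z ⟶ E), P.cofib ζ₁ ∧ P.weq ζ₁ ∧
      P.cofib ζ₂ ∧ P.weq ζ₂ ∧ i₁ ≫ ζ₁ = i₂ ≫ ζ₂ ∧ ζ₁ ≫ σ = σ₁ ∧ ζ₂ ≫ σ = σ₂ := by
  obtain ⟨Q, l, r, hQ, hr⟩ := P.po_exists i₁ i₂ hi₁
  obtain ⟨Z, c, σ, hc, hσ, hcσ⟩ := P.C_fac (hQ.desc σ₁ σ₂ hw)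
  have hlσ : (l ≫ c) ≫ σ = σ₁ := by rw [Category.assoc, hcσ, hQ.inl_desc]
  have hrσ : (r ≫ c) ≫ σ = σ₂ := by rw [Category.assoc, hcσ, hQ.inr_desc]
  refine ⟨Z, l ≫ c, r ≫ c, σ, P.cofib_comp (cofib_of_isPushout hQ.flip hi₂) hc,
    P.weq_of_comp_left hσ (by rw [hlσ]; exact hσ₁), P.cofib_comp hr hc,
    P.weq_of_comp_left hσ (by rw [hrσ]; exact hσ₂), ?_, hlσ, hrσ⟩
  rw [← Category.assoc, hQ.w, Category.assoc]

lemma exists_common_gluing {Pp X E Z₁ Z₂ J₁ J₂ B : C} {fbar : Pp ⟶ E} {pbar : Pp ⟶ X}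
    {q : E ⟶ B} {g : X ⟶ B} {i₁ : Pp ⟶ Z₁} {σ₁ : Z₁ ⟶ E} {i₂ : Pp ⟶ Z₂} {σ₂ : Z₂ ⟶ E}
    {j₁ : J₁ ⟶ B} {j₂ : J₂ ⟶ B} (hw : fbar ≫ q = pbar ≫ g)
    (hi₁ : P.cofib i₁) (hσ₁ : P.weq σ₁) (hiσ₁ : i₁ ≫ σ₁ = fbar)
    (hj₁ : IsGluing pbar i₁ g (σ₁ ≫ q) j₁)
    (hi₂ : P.cofib i₂) (hσ₂ : P.weq σ₂) (hiσ₂ : i₂ ≫ σ₂ = fbar)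
    (hj₂ : IsGluing pbar i₂ g (σ₂ ≫ q) j₂) :
    ∃ (J : C) (j : J ⟶ B), P.FactorsThroughWeq j₁ j ∧ P.FactorsThroughWeq j₂ j := by
  obtain ⟨Z, ζ₁, ζ₂, σ, hζ₁, hζ₁_weq, hζ₂, hζ₂_weq, hζ, hζσ₁, hζσ₂⟩ :=
    exists_refinement_of_cFactorizations hi₁ hσ₁ hi₂ hσ₂ (hiσ₁.trans hiσ₂.symm)
  obtain ⟨J, j, hj⟩ := P.exists_isGluing (P.cofib_comp hi₁ hζ₁) (k := σ ≫ q)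
    (by rw [← hw, ← hiσ₁, ← hζσ₁]; simp only [Category.assoc])
  refine ⟨J, j, hj₁.factorsThroughWeq_of_trivCofib hj hζ₁ hζ₁_weq ?_,
    hj₂.factorsThroughWeq_of_trivCofib (hζ ▸ hj) hζ₂ hζ₂_weq ?_⟩
  · rw [← Category.assoc, hζσ₁]
  · rw [← Category.assoc, hζσ₂]

lemma weqLifting_of_gluing_map {X B E Pp Z J X' B' E' Pp' Z' J' : C} {g : X ⟶ B} {q : E ⟶ B}
    {fbar : Pp ⟶ E} {pbar : Pp ⟶ X} {i : Pp ⟶ Z} {σ : Z ⟶ E} {j : J ⟶ B}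
    (hi : P.cofib i) (hσ : P.weq σ) (hiσ : i ≫ σ = fbar) (hj : IsGluing pbar i g (σ ≫ q) j)
    {g' : X' ⟶ B'} {q' : E' ⟶ B'} {fbar' : Pp' ⟶ E'} {pbar' : Pp' ⟶ X'} {i' : Pp' ⟶ Z'}
    {σ' : Z' ⟶ E'} {j' : J' ⟶ B'} (hw' : fbar' ≫ q' = pbar' ≫ g')
    (hi' : P.cofib i') (hσ' : P.weq σ') (hiσ' : i' ≫ σ' = fbar')
    (hj' : IsGluing pbar' i' g' (σ' ≫ q') j')
    {x : X ⟶ X'} {v : B ⟶ B'} {ε : E ⟶ E'} {ρ : Pp ⟶ Pp'} (hx : P.weq x) (hε : P.weq ε)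
    (hρ : P.weq ρ) (hxg : x ≫ g' = g ≫ v) (hεq : ε ≫ q' = q ≫ v)
    (hρf : ρ ≫ fbar' = fbar ≫ ε) (hρp : ρ ≫ pbar' = pbar ≫ x) :
    P.WeqLifting (j ≫ v) j' := by
  -- transport the C-factorization of `fbar` along `ρ` to one of `fbar'`
  obtain ⟨Zp, l, r, hZ, hr⟩ := P.po_exists i ρ hi
  have w : i ≫ σ ≫ ε = ρ ≫ fbar' := by rw [← Category.assoc, hiσ, hρf]
  have hlσ : l ≫ hZ.desc _ _ w = σ ≫ ε := hZ.inl_desc _ _ w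
  have hrσ : r ≫ hZ.desc _ _ w = fbar' := hZ.inr_desc _ _ w
  have hσp : P.weq (hZ.desc _ _ w) := P.weq_of_comp_right ((P.po_weq hi hZ).1 hρ)
    (by rw [hlσ]; exact P.weq_comp hσ hε)
  obtain ⟨Jp, jp, hjp⟩ := P.exists_isGluing hr (pbar := pbar') (g := g') (k := hZ.desc _ _ w ≫ q')
    (by rw [← Category.assoc, hrσ, hw'])
  have hjp' : IsGluing (pbar ≫ x) i g' ((σ ≫ q) ≫ v) jp := by
    have hk : l ≫ hZ.desc _ _ w ≫ q' = (σ ≫ q) ≫ v := by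
      rw [← Category.assoc, hlσ, Category.assoc, hεq, Category.assoc]
    rw [← hρp, ← hk]
    exact hjp.paste hZ
  obtain ⟨J₄, j₄, hjp₄, hj'₄⟩ := exists_common_gluing hw' hr hσp hrσ hjp hi' hσ' hiσ' hj'
  exact WeqLifting.of_factorsThroughWeq P
    ((hj.factorsThroughWeq_of_weq hjp' hi hx hxg).trans hjp₄) hj'₄

lemma factorsThroughWeq_pullback_of_fFactorizations {A B A' B' E E' V : C} {f : A ⟶ B}
    {f' : A' ⟶ B'} {u : A ⟶ A'} {v : B ⟶ B'} {τ : A ⟶ E} {q : E ⟶ B} {τ' : A' ⟶ E'}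
    {q' : E' ⟶ B'} {fst : V ⟶ E'} {snd : V ⟶ B} (hE : P.CofModel E) (hu : P.weq u)
    (hv : P.weq v) (hsq : f ≫ v = u ≫ f') (hτ : P.weq τ) (hτq : τ ≫ q = f) (hτ' : P.weq τ')
    (hq' : P.fib q') (hτq' : τ' ≫ q' = f') (hV : IsPullback fst snd q' v) :
    P.FactorsThroughWeq q snd := by
  have w : (u ≫ τ') ≫ q' = f ≫ v := by rw [Category.assoc, hτq', hsq]
  have hl : P.weq (hV.lift _ _ w) := P.weq_of_comp_left ((P.pb_weq hq' hV).1 hv)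
    (by rw [hV.lift_fst]; exact P.weq_comp hu hτ')
  exact factorsThroughWeq_of_fFactorizations hE hτ hl (fib_of_isPullback hV hq')
    (by rw [hτq, hV.lift_snd])

variable (P) in
lemma exists_isJoin {X A B : C} (g : X ⟶ B) (f : A ⟶ B) :
    ∃ (J : C) (j : J ⟶ B), P.IsJoin g f j := by
  obtain ⟨E, τ, q, hτ, hq, hτq⟩ := P.F_fac f
  obtain ⟨Pp, fbar, pbar, hpb, -⟩ := P.pb_exists q g hq
  obtain ⟨Z, i, σ, hi, hσ, hiσ⟩ := P.C_fac fbar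
  obtain ⟨J, j, a, b, hpo, ha, hb⟩ :=
    P.exists_isGluing hi (k := σ ≫ q) (by rw [← hpb.w, ← Category.assoc, hiσ])
  exact ⟨J, j, E, τ, q, hτ, hq, hτq, Pp, Z, fbar, pbar, i, σ, a, b, hpb, hi, hσ, hiσ, hpo,
    ha, hb⟩

lemma weqLifting_of_isJoin (hc : ∀ X : C, P.CofModel X) {A B A' B' X X' J J' : C}
    {f : A ⟶ B} {f' : A' ⟶ B'} {u : A ⟶ A'} {v : B ⟶ B'} (hu : P.weq u) (hv : P.weq v)
    (hsq : f ≫ v = u ≫ f') {g : X ⟶ B} {g' : X' ⟶ B'} {x : X ⟶ X'} (hx : P.weq x)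
    (hxg : x ≫ g' = g ≫ v) {j : J ⟶ B} {j' : J' ⟶ B'} (hj : P.IsJoin g f j)
    (hj' : P.IsJoin g' f' j') : P.WeqLifting (j ≫ v) j' := by
  obtain ⟨E, τ, q, hτ, hq, hτq, Pp, Z, fbar, pbar, i, σ, a, b, hpb, hi, hσ, hiσ, hpo,
    ha, hb⟩ := hj
  obtain ⟨E', τ', q', hτ', hq', hτq', Pp', Z', fbar', pbar', i', σ', a', b', hpb', hi', hσ',
    hiσ', hpo', ha', hb'⟩ := hj'
  obtain ⟨V, fstV, sndV, hV, hsndV⟩ := P.pb_exists q' v hq'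
  obtain ⟨e, he, heq⟩ :=
    factorsThroughWeq_pullback_of_fFactorizations (hc E) hu hv hsq hτ hτq hτ' hq' hτq' hV
  -- the comparison `Pp ⟶ Pp'` is built through `W = V ×_B X`: first over `e`, then over `x`
  obtain ⟨W, fstW, sndW, hW, -⟩ := P.pb_exists sndV g hsndV
  have w₀ : (fbar ≫ e) ≫ sndV = pbar ≫ g := by rw [Category.assoc, heq, hpb.w]
  have hρ₀ := weq_pullbackMap_of_weq hq hsndV he heq hpb hW
    (hW.lift_fst _ _ w₀) (hW.lift_snd _ _ w₀)
  have hWV : IsPullback (fstW ≫ fstV) sndW q' (x ≫ g') := by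
    rw [hxg]; exact hW.paste_horiz hV
  have wβ : (fstW ≫ fstV) ≫ q' = (sndW ≫ x) ≫ g' := by rw [hWV.w, Category.assoc]
  have hβ := weq_pullbackMap_of_weq_base hWV hpb' hq' hx
    (hpb'.lift_fst _ _ wβ) (hpb'.lift_snd _ _ wβ)
  refine weqLifting_of_gluing_map hi hσ hiσ ⟨a, b, hpo, ha, hb⟩ hpb'.w hi' hσ' hiσ'
    ⟨a', b', hpo', ha', hb'⟩ hx (P.weq_comp he ((P.pb_weq hq' hV).1 hv))
    (P.weq_comp hρ₀ hβ) hxg (by rw [Category.assoc, hV.w, ← Category.assoc, heq]) ?_ ?_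
  · simp only [Category.assoc, IsPullback.lift_fst, IsPullback.lift_fst_assoc]
  · simp only [Category.assoc, IsPullback.lift_snd, IsPullback.lift_snd_assoc]

lemma weqLifting_of_isIterJoin (hc : ∀ X : C, P.CofModel X) {A B A' B' : C} {f : A ⟶ B}
    {f' : A' ⟶ B'} {u : A ⟶ A'} {v : B ⟶ B'} (hu : P.weq u) (hv : P.weq v)
    (hsq : f ≫ v = u ≫ f') (n : ℕ) {X X' : C} {h : X ⟶ B} {h' : X' ⟶ B'}
    (hh : P.IsIterJoin f n h) (hh' : P.IsIterJoin f' n h') : P.WeqLifting (h ≫ v) h' := by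
  induction n generalizing X X' with
  | zero =>
    cases hh
    cases hh'
    exact WeqLifting.of_factorsThroughWeq P ⟨u, hu, hsq.symm⟩ (FactorsThroughWeq.refl P f')
  | succ n ih =>
    obtain _ | ⟨hprev, hjoin⟩ := hh
    obtain _ | ⟨hprev', hjoin'⟩ := hh'
    obtain ⟨E, τ, q, hτ, -, hτq, s, hs, hsq'⟩ := ih hprev hprev'
    obtain ⟨J, j, hj⟩ := P.exists_isJoin q f'
    have h₁ := weqLifting_of_isJoin hc hu hv hsq hs hsq' hjoin hj
    have h₂ : P.WeqLifting h' j := by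
      simpa using weqLifting_of_isJoin hc (P.weq_id A') (P.weq_id B') (by simp) hτ
        (by rw [hτq, Category.comp_id]) hjoin' hj
    exact h₁.trans hc h₂.symm

lemma weaklyEquivMor_of_weqLifting {X B X' B' : C} {g : X ⟶ B} {g' : X' ⟶ B'} {v : B ⟶ B'}
    (hv : P.weq v) (h : P.WeqLifting (g ≫ v) g') :
    P.WeaklyEquivMor (Arrow.mk g) (Arrow.mk g') := by
  obtain ⟨E, τ, q, hτ, -, hτq, s, hs, hsq⟩ := h
  have step : P.MorWeqStep (Arrow.mk g) (Arrow.mk q) := ⟨Arrow.homMk s v hsq, hs, hv⟩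
  have step' : P.MorWeqStep (Arrow.mk g') (Arrow.mk q) :=
    ⟨Arrow.homMk τ (𝟙 B') (by simp [hτq]), hτ, P.weq_id B'⟩
  exact (Relation.EqvGen.rel _ _ step).trans _ _ _ (Relation.EqvGen.rel _ _ step').symm

end PreJCat

end

/-- In a J-category, if `f` and `f'` are weakly equivalent via a
commutative square with vertical weak equivalences `u, v`, then for each `n` the
`n`-th iterated join morphisms `h_n` and `h'_n` are weakly equivalent morphisms;
in particular `v ∘ h_n` admits a weak lifting along `h'_n` via a weak
equivalence. -/
theorem iterJoin_weaklyEquiv (J : JCat C)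
    (hc : ∀ Xo : C, J.toPreJCat.CofModel Xo)
    {A B A' B' : C} (f : A ⟶ B) (f' : A' ⟶ B')
    (u : A ⟶ A') (v : B ⟶ B')
    (hu : J.toPreJCat.weq u) (hv : J.toPreJCat.weq v)
    (hsq : f ≫ v = u ≫ f')
    (n : ℕ) {X X' : C} (hn : X ⟶ B) (hn' : X' ⟶ B')
    (hhn : J.toPreJCat.IsIterJoin f n hn)
    (hhn' : J.toPreJCat.IsIterJoin f' n hn') :
    J.toPreJCat.WeaklyEquivMor (Arrow.mk hn) (Arrow.mk hn') ∧
      ∃ (Ez : C) (τ : X' ⟶ Ez) (q : Ez ⟶ B'),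
        J.toPreJCat.weq τ ∧ J.toPreJCat.fib q ∧ τ ≫ q = hn' ∧
        ∃ s : X ⟶ Ez, J.toPreJCat.weq s ∧ s ≫ q = hn ≫ v := by
  have h := PreJCat.weqLifting_of_isIterJoin hc hu hv hsq n hhn hhn'
  exact ⟨PreJCat.weaklyEquivMor_of_weqLifting hv h, h⟩
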